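/- arXiv:2004.04327 — 2 statements merged into one kernel-verified Lean document; each statement's English description precedes it below -/
import Mathlib

section
/- With all parameters other than ρ fixed, the downlink coverage probability is nonincreasing in the broadcast radius ρ: if 0 < ρ₁ ≤ ρ₂ then C_DL computed with ρ₂ is at most C_DL computed with ρ₁. (A larger vehicular safety-message range degrades downlink coverage; the key step is that for each x, r the sum K₂(x) + K₃(x) is nondecreasing in ρ because the map s ↦ 2μs + 2μ∫ₛ^∞ f(u) du is nondecreasing whenever 0 ≤ f ≤ 1.) -/
open MeasureTheory Real Set Filter

noncomputable def A (rho mu : ℝ) : ℝ :=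
  ∫ u in (0:ℝ)..rho, (1 - Real.exp (-2 * mu * Real.sqrt (rho ^ 2 - u ^ 2)))

noncomputable def P_SL (lamL mu rho : ℝ) : ℝ := 1 - Real.exp (-2 * lamL * A rho mu)

noncomputable def P_DL (lamL mu rho : ℝ) : ℝ := Real.exp (-2 * lamL * A rho mu)

noncomputable def K1 (tau alpha x : ℝ) : ℝ :=
  x ^ 2 + 2 * ∫ r in Set.Ioi x,
    tau * x ^ alpha * r ^ (1 - alpha) / (1 + tau * x ^ alpha * r ^ (-alpha))

noncomputable def K2 (mu rho alpha eta tau x : ℝ) : ℝ :=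
  ∫ r in (0:ℝ)..rho,
    (1 - Real.exp (-2 * mu * Real.sqrt (rho ^ 2 - r ^ 2)
      - 2 * mu * ∫ u in Set.Ioi (Real.sqrt (rho ^ 2 - r ^ 2)),
          tau * x ^ alpha * eta * (r ^ 2 + u ^ 2) ^ (-(alpha / 2)) /
            (1 + tau * x ^ alpha * eta * (r ^ 2 + u ^ 2) ^ (-(alpha / 2)))))

noncomputable def K3 (mu rho alpha eta tau x : ℝ) : ℝ :=
  ∫ r in Set.Ioi rho,
    (1 - Real.exp (-2 * mu * ∫ u in Set.Ioi (0:ℝ),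
        tau * x ^ alpha * eta * (r ^ 2 + u ^ 2) ^ (-(alpha / 2)) /
          (1 + tau * x ^ alpha * eta * (r ^ 2 + u ^ 2) ^ (-(alpha / 2)))))

noncomputable def C_DL (lamB lamL mu rho alpha eta tau : ℝ) : ℝ :=
  ∫ x in Set.Ioi (0:ℝ),
    2 * Real.pi * lamB * x *
      Real.exp (-(Real.pi * lamB * K1 tau alpha x) - 2 * lamL * K2 mu rho alpha eta tau x
        - 2 * lamL * K3 mu rho alpha eta tau x)


/-!
For fixed `x`, `K₂` and `K₃` have the same integrand in `r`, namely
`1 - exp (-2μ s - 2μ ∫_s^∞ f)` with `s = √(ρ² - r²)` (which vanishes for `r ≥ ρ`),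
so `K₂ + K₃` is a single integral over `r > 0`. As `0 ≤ f ≤ 1`, the map
`s ↦ s + ∫_s^∞ f` is nondecreasing, and `s` grows with `ρ`; hence `K₂ + K₃` is
nondecreasing in `ρ` and the integrand of `C_DL` is nonincreasing. All integrals are finite:
`f u ≤ c (r² + u²)^(-α/2)`, whose integral in `u` is a multiple of `r^(1-α)`, makes the
tail of `K₃` converge for `α > 2`, and `K₁ x ≥ x²` dominates the integrand of `C_DL`
by `x exp (-π λ_b x²)`.
-/

theorem add_setIntegral_Ioi_mono {f : ℝ → ℝ} {s₁ s₂ : ℝ}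
    (hf : IntegrableOn f (Ioi s₁)) (hf_le : ∀ u, f u ≤ 1) (hs : s₁ ≤ s₂) :
    s₁ + ∫ u in Ioi s₁, f u ≤ s₂ + ∫ u in Ioi s₂, f u := by
  have hsub : (∫ u in Ioi s₁, f u) - ∫ u in Ioi s₂, f u ≤ s₂ - s₁ := by
    rw [intervalIntegral.integral_Ioi_sub_Ioi hf hs]
    calc ∫ u in s₁..s₂, f u ≤ ∫ _ in s₁..s₂, (1 : ℝ) :=
          intervalIntegral.integral_mono_on hs
            ((intervalIntegrable_iff_integrableOn_Ioc_of_le hs).2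
              (hf.mono_set Ioc_subset_Ioi_self))
            intervalIntegrable_const fun u _ => hf_le u
      _ = s₂ - s₁ := by simp
  linarith

theorem measurable_setIntegral {X : Type*} [MeasurableSpace X] {F : X → ℝ → ℝ}
    (hF : Measurable (Function.uncurry F)) (s : Set ℝ) :
    Measurable fun x => ∫ u in s, F x u :=
  (hF.stronglyMeasurable.integral_prod_right' (ν := volume.restrict s)).measurable

theorem measurable_setIntegral_Ioi {X : Type*} [MeasurableSpace X] {F : X → ℝ → ℝ}
    (hF : Measurable (Function.uncurry F)) {s : X → ℝ} (hs : Measurable s) :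
    Measurable fun x => ∫ u in Ioi (s x), F x u := by
  have hind : Measurable ({p : X × ℝ | s p.1 < p.2}.indicator (Function.uncurry F)) :=
    hF.indicator (measurableSet_lt (hs.comp measurable_fst) measurable_snd)
  convert (hind.stronglyMeasurable.integral_prod_right' (ν := volume)).measurable using 2 with x
  rw [← integral_indicator measurableSet_Ioi]
  rfl

theorem rpow_neg_sq_add_mul_sq {r : ℝ} (hr : 0 < r) (alpha t : ℝ) :
    (r ^ 2 + (r * t) ^ 2) ^ (-(alpha / 2)) = r ^ (-alpha) * (1 + t ^ 2) ^ (-(alpha / 2)) := by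
  rw [show r ^ 2 + (r * t) ^ 2 = r ^ 2 * (1 + t ^ 2) by ring,
    mul_rpow (by positivity) (by positivity), ← rpow_natCast, ← rpow_mul hr.le]
  congr 2
  push_cast
  ring

theorem integrable_rpow_neg_sq_add_sq {r alpha : ℝ} (hr : 0 < r) (halpha : 1 < alpha) :
    Integrable fun u : ℝ => (r ^ 2 + u ^ 2) ^ (-(alpha / 2)) := by
  have h : Integrable fun t : ℝ => (1 + t ^ 2) ^ (-(alpha / 2)) := by
    simpa [neg_div] using integrable_rpow_neg_one_add_norm_sq (E := ℝ) (μ := volume)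
      (r := alpha) (by simpa using halpha)
  convert (h.comp_mul_left' (inv_ne_zero hr.ne')).const_mul (r ^ (-alpha)) using 2 with u
  rw [← rpow_neg_sq_add_mul_sq hr, mul_inv_cancel_left₀ hr.ne']

theorem integral_rpow_neg_sq_add_sq {r : ℝ} (hr : 0 < r) (alpha : ℝ) :
    ∫ u : ℝ, (r ^ 2 + u ^ 2) ^ (-(alpha / 2)) =
      r ^ (1 - alpha) * ∫ t : ℝ, (1 + t ^ 2) ^ (-(alpha / 2)) := by
  have h := Measure.integral_comp_mul_left (fun u : ℝ => (r ^ 2 + u ^ 2) ^ (-(alpha / 2))) r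
  simp only [rpow_neg_sq_add_mul_sq hr, integral_const_mul, smul_eq_mul,
    abs_of_pos (inv_pos.2 hr)] at h
  rw [eq_inv_mul_iff_mul_eq₀ hr.ne'] at h
  rw [← h, sub_eq_add_neg, rpow_add hr, rpow_one, mul_assoc]

theorem integrableOn_mul_exp_neg_of_mul_sq_le {E : ℝ → ℝ} {b : ℝ} (hb : 0 < b)
    (hE : Measurable E) (hbE : ∀ x > 0, b * x ^ 2 ≤ E x) :
    IntegrableOn (fun x => x * Real.exp (-E x)) (Ioi 0) := by
  refine (integrable_mul_exp_neg_mul_sq hb).integrableOn.mono'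
    (by fun_prop : Measurable fun x => x * Real.exp (-E x)).aestronglyMeasurable ?_
  filter_upwards [ae_restrict_mem measurableSet_Ioi] with x (hx : 0 < x)
  rw [norm_of_nonneg (by positivity)]
  gcongr
  linarith [hbE x hx]

/-- The integrand of `K2` and `K3` in the vehicle coordinate `u` along a line at distance `r`,
with `c = τ x^α η`. -/
noncomputable def interferenceKernel (c alpha r u : ℝ) : ℝ :=
  c * (r ^ 2 + u ^ 2) ^ (-(alpha / 2)) / (1 + c * (r ^ 2 + u ^ 2) ^ (-(alpha / 2)))

section interferenceKernel

variable {c alpha r : ℝ}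

theorem interferenceKernel_nonneg (hc : 0 ≤ c) (u : ℝ) :
    0 ≤ interferenceKernel c alpha r u := by
  unfold interferenceKernel
  positivity

theorem interferenceKernel_le_one (hc : 0 ≤ c) (u : ℝ) :
    interferenceKernel c alpha r u ≤ 1 := by
  have : 0 ≤ c * (r ^ 2 + u ^ 2) ^ (-(alpha / 2)) := by positivity
  exact div_le_one_of_le₀ (by linarith) (by linarith)

theorem interferenceKernel_le (hc : 0 ≤ c) (u : ℝ) :
    interferenceKernel c alpha r u ≤ c * (r ^ 2 + u ^ 2) ^ (-(alpha / 2)) := by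
  have : 0 ≤ c * (r ^ 2 + u ^ 2) ^ (-(alpha / 2)) := by positivity
  exact div_le_self this (by linarith)

theorem measurable_interferenceKernel (alpha : ℝ) :
    Measurable fun p : (ℝ × ℝ) × ℝ => interferenceKernel p.1.1 alpha p.1.2 p.2 := by
  unfold interferenceKernel
  fun_prop

theorem integrable_interferenceKernel (hc : 0 ≤ c) (halpha : 1 < alpha) (hr : 0 < r) :
    Integrable (interferenceKernel c alpha r) :=
  ((integrable_rpow_neg_sq_add_sq hr halpha).const_mul c).mono'
    ((measurable_interferenceKernel alpha).comp
      (measurable_prodMk_left (x := (c, r)))).aestronglyMeasurable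
    (ae_of_all _ fun u => by
      rw [norm_of_nonneg (interferenceKernel_nonneg hc u)]
      exact interferenceKernel_le hc u)

theorem integral_Ioi_interferenceKernel_le (hc : 0 ≤ c) (halpha : 1 < alpha) (hr : 0 < r) :
    ∫ u in Ioi 0, interferenceKernel c alpha r u ≤
      c * (∫ t : ℝ, (1 + t ^ 2) ^ (-(alpha / 2))) * r ^ (1 - alpha) :=
  calc ∫ u in Ioi 0, interferenceKernel c alpha r u
      ≤ ∫ u, interferenceKernel c alpha r u :=
        setIntegral_le_integral (integrable_interferenceKernel hc halpha hr)
          (ae_of_all _ (interferenceKernel_nonneg hc))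
    _ ≤ ∫ u, c * (r ^ 2 + u ^ 2) ^ (-(alpha / 2)) :=
        integral_mono (integrable_interferenceKernel hc halpha hr)
          ((integrable_rpow_neg_sq_add_sq hr halpha).const_mul c) (interferenceKernel_le hc)
    _ = c * (∫ t : ℝ, (1 + t ^ 2) ^ (-(alpha / 2))) * r ^ (1 - alpha) := by
        rw [integral_const_mul, integral_rpow_neg_sq_add_sq hr]
        ring

end interferenceKernel

/-- The common integrand of `K2` (for `r < ρ`) and `K3` (for `r > ρ`), with `c = τ x^α η`. -/
noncomputable def lineIntegrand (mu alpha c rho r : ℝ) : ℝ :=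
  1 - Real.exp (-2 * mu * Real.sqrt (rho ^ 2 - r ^ 2)
    - 2 * mu * ∫ u in Ioi (Real.sqrt (rho ^ 2 - r ^ 2)), interferenceKernel c alpha r u)

section lineIntegrand

variable {mu alpha c rho r : ℝ}

theorem lineIntegrand_le_one : lineIntegrand mu alpha c rho r ≤ 1 := by
  unfold lineIntegrand
  linarith [Real.exp_pos (-2 * mu * Real.sqrt (rho ^ 2 - r ^ 2)
    - 2 * mu * ∫ u in Ioi (Real.sqrt (rho ^ 2 - r ^ 2)), interferenceKernel c alpha r u)]

theorem lineIntegrand_nonneg (hmu : 0 ≤ mu) (hc : 0 ≤ c) :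
    0 ≤ lineIntegrand mu alpha c rho r := by
  have hJ : 0 ≤ ∫ u in Ioi (Real.sqrt (rho ^ 2 - r ^ 2)), interferenceKernel c alpha r u :=
    setIntegral_nonneg measurableSet_Ioi fun u _ => interferenceKernel_nonneg hc u
  have hs := Real.sqrt_nonneg (rho ^ 2 - r ^ 2)
  unfold lineIntegrand
  rw [sub_nonneg, Real.exp_le_one_iff]
  nlinarith

theorem lineIntegrand_eq_of_le (hrho : 0 ≤ rho) (hr : rho ≤ r) :
    lineIntegrand mu alpha c rho r =
      1 - Real.exp (-2 * mu * ∫ u in Ioi 0, interferenceKernel c alpha r u) := by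
  rw [lineIntegrand, Real.sqrt_eq_zero'.2 (by nlinarith), mul_zero, zero_sub, neg_mul, neg_mul]

theorem lineIntegrand_le_of_le (hrho : 0 ≤ rho) (hr : rho ≤ r) :
    lineIntegrand mu alpha c rho r ≤ 2 * mu * ∫ u in Ioi 0, interferenceKernel c alpha r u := by
  rw [lineIntegrand_eq_of_le hrho hr]
  linarith [Real.add_one_le_exp (-2 * mu * ∫ u in Ioi 0, interferenceKernel c alpha r u)]

theorem lineIntegrand_mono (hmu : 0 ≤ mu) (hc : 0 ≤ c) (halpha : 1 < alpha) (hr : 0 < r)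
    {rho₁ rho₂ : ℝ} (hrho₁ : 0 ≤ rho₁) (h12 : rho₁ ≤ rho₂) :
    lineIntegrand mu alpha c rho₁ r ≤ lineIntegrand mu alpha c rho₂ r := by
  have hs : Real.sqrt (rho₁ ^ 2 - r ^ 2) ≤ Real.sqrt (rho₂ ^ 2 - r ^ 2) :=
    Real.sqrt_le_sqrt (by nlinarith)
  have key := add_setIntegral_Ioi_mono (integrable_interferenceKernel hc halpha hr).integrableOn
    (interferenceKernel_le_one hc) hs
  unfold lineIntegrand
  gcongr 1 - Real.exp ?_
  nlinarith

theorem measurable_lineIntegrand (mu alpha rho : ℝ) :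
    Measurable fun p : ℝ × ℝ => lineIntegrand mu alpha p.1 rho p.2 := by
  have hs : Measurable fun p : ℝ × ℝ => Real.sqrt (rho ^ 2 - p.2 ^ 2) := by fun_prop
  have hJ := measurable_setIntegral_Ioi
    (F := fun (p : ℝ × ℝ) u => interferenceKernel p.1 alpha p.2 u)
    (measurable_interferenceKernel alpha) hs
  unfold lineIntegrand
  fun_prop

theorem integrableOn_lineIntegrand (hmu : 0 ≤ mu) (hc : 0 ≤ c) (halpha : 2 < alpha)
    (hrho : 0 < rho) : IntegrableOn (lineIntegrand mu alpha c rho) (Ioi 0) := by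
  have hmeas : Measurable (lineIntegrand mu alpha c rho) :=
    Measurable.of_uncurry_left (f := fun c r => lineIntegrand mu alpha c rho r)
      (measurable_lineIntegrand mu alpha rho)
  rw [← Ioc_union_Ioi_eq_Ioi hrho.le, integrableOn_union]
  constructor
  · refine (integrableOn_const measure_Ioc_lt_top.ne (C := (1 : ℝ))).mono'
      hmeas.aestronglyMeasurable (ae_of_all _ fun r => ?_)
    rw [norm_of_nonneg (lineIntegrand_nonneg hmu hc)]
    exact lineIntegrand_le_one
  · refine ((integrableOn_Ioi_rpow_of_lt (show 1 - alpha < -1 by linarith) hrho).const_mul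
      (2 * mu * (c * ∫ t : ℝ, (1 + t ^ 2) ^ (-(alpha / 2))))).mono'
      hmeas.aestronglyMeasurable ?_
    filter_upwards [ae_restrict_mem measurableSet_Ioi] with r (hr : rho < r)
    rw [norm_of_nonneg (lineIntegrand_nonneg hmu hc)]
    calc lineIntegrand mu alpha c rho r
        ≤ 2 * mu * ∫ u in Ioi 0, interferenceKernel c alpha r u :=
          lineIntegrand_le_of_le hrho.le hr.le
      _ ≤ 2 * mu * (c * (∫ t : ℝ, (1 + t ^ 2) ^ (-(alpha / 2))) * r ^ (1 - alpha)) :=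
          mul_le_mul_of_nonneg_left
            (integral_Ioi_interferenceKernel_le hc (by linarith) (hrho.trans hr)) (by positivity)
      _ = _ := by ring

end lineIntegrand

section K

variable {mu rho alpha eta tau x : ℝ}

theorem K3_eq_integral_lineIntegrand (hrho : 0 ≤ rho) :
    K3 mu rho alpha eta tau x =
      ∫ r in Ioi rho, lineIntegrand mu alpha (tau * x ^ alpha * eta) rho r :=
  setIntegral_congr_fun measurableSet_Ioi fun _ hr =>
    (lineIntegrand_eq_of_le hrho (le_of_lt hr)).symm

theorem K2_add_K3_eq (hmu : 0 ≤ mu) (halpha : 2 < alpha) (hc : 0 ≤ tau * x ^ alpha * eta)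
    (hrho : 0 < rho) :
    K2 mu rho alpha eta tau x + K3 mu rho alpha eta tau x =
      ∫ r in Ioi 0, lineIntegrand mu alpha (tau * x ^ alpha * eta) rho r := by
  have h := integrableOn_lineIntegrand hmu hc halpha hrho
  rw [K3_eq_integral_lineIntegrand hrho.le]
  exact intervalIntegral.integral_interval_add_Ioi h (h.mono_set (Ioi_subset_Ioi hrho.le))

theorem K2_add_K3_nonneg (hmu : 0 ≤ mu) (halpha : 2 < alpha) (hc : 0 ≤ tau * x ^ alpha * eta)
    (hrho : 0 < rho) : 0 ≤ K2 mu rho alpha eta tau x + K3 mu rho alpha eta tau x := by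
  rw [K2_add_K3_eq hmu halpha hc hrho]
  exact setIntegral_nonneg measurableSet_Ioi fun _ _ => lineIntegrand_nonneg hmu hc

theorem K2_add_K3_mono (hmu : 0 ≤ mu) (halpha : 2 < alpha) (hc : 0 ≤ tau * x ^ alpha * eta)
    {rho₁ rho₂ : ℝ} (h1 : 0 < rho₁) (h12 : rho₁ ≤ rho₂) :
    K2 mu rho₁ alpha eta tau x + K3 mu rho₁ alpha eta tau x ≤
      K2 mu rho₂ alpha eta tau x + K3 mu rho₂ alpha eta tau x := by
  have h2 := h1.trans_le h12
  rw [K2_add_K3_eq hmu halpha hc h1, K2_add_K3_eq hmu halpha hc h2]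
  exact setIntegral_mono_on (integrableOn_lineIntegrand hmu hc halpha h1)
    (integrableOn_lineIntegrand hmu hc halpha h2) measurableSet_Ioi
    fun _ hr => lineIntegrand_mono hmu hc (by linarith) hr h1.le h12

theorem sq_le_K1 (htau : 0 ≤ tau) (hx : 0 ≤ x) : x ^ 2 ≤ K1 tau alpha x := by
  have h : 0 ≤ ∫ r in Ioi x,
      tau * x ^ alpha * r ^ (1 - alpha) / (1 + tau * x ^ alpha * r ^ (-alpha)) :=
    setIntegral_nonneg measurableSet_Ioi fun r (hr : x < r) => by
      have := hx.trans_lt hr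
      positivity
  rw [K1]
  linarith

theorem measurable_K1 (tau alpha : ℝ) : Measurable (K1 tau alpha) := by
  have h := measurable_setIntegral_Ioi
    (F := fun x r => tau * x ^ alpha * r ^ (1 - alpha) / (1 + tau * x ^ alpha * r ^ (-alpha)))
    (by fun_prop) measurable_id
  unfold K1
  fun_prop

theorem measurable_uncurry_lineIntegrand :
    Measurable (Function.uncurry fun x r => lineIntegrand mu alpha (tau * x ^ alpha * eta) rho r) :=
  (measurable_lineIntegrand mu alpha rho).comp
    (by fun_prop : Measurable fun p : ℝ × ℝ => (tau * p.1 ^ alpha * eta, p.2))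

theorem measurable_K2 : Measurable fun x => K2 mu rho alpha eta tau x :=
  (measurable_setIntegral measurable_uncurry_lineIntegrand _).sub
    (measurable_setIntegral measurable_uncurry_lineIntegrand _)

theorem measurable_K3 (hrho : 0 ≤ rho) : Measurable fun x => K3 mu rho alpha eta tau x := by
  simp only [K3_eq_integral_lineIntegrand hrho]
  exact measurable_setIntegral measurable_uncurry_lineIntegrand _

end K

theorem integrableOn_C_DL_integrand {lamB lamL mu rho alpha eta tau : ℝ} (hlamB : 0 < lamB)
    (hlamL : 0 ≤ lamL) (hmu : 0 ≤ mu) (halpha : 2 < alpha) (heta : 0 ≤ eta) (htau : 0 ≤ tau)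
    (hrho : 0 < rho) :
    IntegrableOn (fun x => 2 * π * lamB * x *
      Real.exp (-(π * lamB * K1 tau alpha x) - 2 * lamL * K2 mu rho alpha eta tau x
        - 2 * lamL * K3 mu rho alpha eta tau x)) (Ioi 0) := by
  have hK1 := measurable_K1 tau alpha
  have hK2 := measurable_K2 (mu := mu) (rho := rho) (alpha := alpha) (eta := eta) (tau := tau)
  have hK3 := measurable_K3 (mu := mu) (alpha := alpha) (eta := eta) (tau := tau) hrho.le
  have h := integrableOn_mul_exp_neg_of_mul_sq_le
    (E := fun x => π * lamB * K1 tau alpha x +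
      2 * lamL * (K2 mu rho alpha eta tau x + K3 mu rho alpha eta tau x))
    (by positivity : 0 < π * lamB) (by fun_prop) fun x (hx : 0 < x) => by
      have hK := K2_add_K3_nonneg hmu halpha (by positivity : 0 ≤ tau * x ^ alpha * eta) hrho
      calc π * lamB * x ^ 2 ≤ π * lamB * K1 tau alpha x := by
            gcongr
            exact sq_le_K1 htau hx.le
        _ ≤ _ := le_add_of_nonneg_right (by positivity)
  refine IntegrableOn.congr_fun (h.const_mul (2 * π * lamB)) (fun x _ => ?_) measurableSet_Ioi
  ring_nf

theorem downlink_coverage_antitone_in_rho (lamB lamL mu alpha eta tau : ℝ)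
    (hlamB : 0 < lamB) (hlamL : 0 < lamL) (hmu : 0 < mu)
    (halpha : 2 < alpha) (heta : 0 < eta) (htau : 0 < tau) :
    ∀ rho₁ rho₂ : ℝ, 0 < rho₁ → rho₁ ≤ rho₂ →
      C_DL lamB lamL mu rho₂ alpha eta tau ≤ C_DL lamB lamL mu rho₁ alpha eta tau := by
  intro rho₁ rho₂ h1 h12
  refine setIntegral_mono_on
    (integrableOn_C_DL_integrand hlamB hlamL.le hmu.le halpha heta.le htau.le (h1.trans_le h12))
    (integrableOn_C_DL_integrand hlamB hlamL.le hmu.le halpha heta.le htau.le h1)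
    measurableSet_Ioi fun x (hx : 0 < x) => ?_
  have hK := K2_add_K3_mono hmu.le halpha (by positivity : 0 ≤ tau * x ^ alpha * eta) h1 h12
  have hK' := mul_le_mul_of_nonneg_left hK (by positivity : (0 : ℝ) ≤ 2 * lamL)
  gcongr 2 * π * lamB * x * Real.exp ?_
  linarith
end

section
/- For every τ > 0, C_DL(τ) ≤ 1 / (1 + 2 ∫₁^∞ τ t / (t^α + τ) dt); consequently lim_{τ → ∞} C_DL(τ) = 0. -/
open MeasureTheory Real Set Filter

/-! The substitution `r = x t` turns `K₁(x)` into `x² (1 + 2 I(τ))` with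
`I(τ) = ∫₁^∞ τ t / (t^α + τ) dt`, while `K₂, K₃ ≥ 0` since their integrands have the form
`1 - exp (-y)` with `y ≥ 0`. Dropping them bounds `C_DL(τ)` by
`∫₀^∞ 2π λ_b x exp (-π λ_b (1 + 2 I(τ)) x²) dx = 1 / (1 + 2 I(τ))`. The integrand of `I(τ)` is at
least `t / 2` on `(1, τ^{1/α}]`, so `I(τ) ≥ (τ^{2/α} - 1) / 4 → ∞`. -/

theorem integral_Ioi_mul_exp_neg_mul_sq {b : ℝ} (hb : 0 < b) :
    ∫ x in Ioi (0 : ℝ), x * exp (-b * x ^ 2) = (2 * b)⁻¹ := by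
  have h := integral_mul_cexp_neg_mul_sq (b := (b : ℂ)) (by simpa using hb)
  rw [← Complex.ofReal_inj]
  push_cast
  rw [← h, ← integral_complex_ofReal]
  push_cast
  rfl

noncomputable def sirIntegral (alpha tau : ℝ) : ℝ :=
  ∫ t in Ioi (1 : ℝ), tau * t / (t ^ alpha + tau)

theorem sirIntegrand_nonneg (alpha : ℝ) {tau t : ℝ} (htau : 0 ≤ tau) (ht : 0 ≤ t) :
    0 ≤ tau * t / (t ^ alpha + tau) := by
  have := rpow_nonneg ht alpha
  positivity

theorem sirIntegral_nonneg (alpha : ℝ) {tau : ℝ} (htau : 0 ≤ tau) : 0 ≤ sirIntegral alpha tau :=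
  setIntegral_nonneg measurableSet_Ioi fun t (ht : 1 < t) =>
    sirIntegrand_nonneg alpha htau (zero_le_one.trans ht.le)

theorem integrableOn_sirIntegrand {alpha tau : ℝ} (halpha : 2 < alpha) (htau : 0 ≤ tau) :
    IntegrableOn (fun t : ℝ => tau * t / (t ^ alpha + tau)) (Ioi 1) := by
  have hdom := (integrableOn_Ioi_rpow_of_lt (a := 1 - alpha) (by linarith) one_pos).const_mul tau
  refine hdom.mono' (by fun_prop : Measurable _).aestronglyMeasurable
    ((ae_restrict_iff' measurableSet_Ioi).2 (ae_of_all _ fun t (ht : 1 < t) => ?_))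
  have ht0 : 0 < t := one_pos.trans ht
  have hta : 0 < t ^ alpha := rpow_pos_of_pos ht0 alpha
  rw [norm_of_nonneg (sirIntegrand_nonneg alpha htau ht0.le), rpow_sub ht0, rpow_one,
    mul_div_assoc]
  exact mul_le_mul_of_nonneg_left (div_le_div_of_nonneg_left ht0.le hta (by linarith)) htau

theorem le_sirIntegral {alpha tau : ℝ} (halpha : 2 < alpha) (htau : 1 ≤ tau) :
    ((tau ^ alpha⁻¹) ^ 2 - 1) / 4 ≤ sirIntegral alpha tau := by
  have htau0 : 0 < tau := one_pos.trans_le htau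
  have ha0 : 0 < alpha := by linarith
  set S := tau ^ alpha⁻¹
  have hS : 1 ≤ S := one_le_rpow htau (by positivity)
  have hSa : S ^ alpha = tau := by rw [← rpow_mul htau0.le, inv_mul_cancel₀ ha0.ne', rpow_one]
  have hint := integrableOn_sirIntegrand halpha htau0.le
  have hhalf : ∀ t ∈ Ioc 1 S, t / 2 ≤ tau * t / (t ^ alpha + tau) := by
    intro t ⟨ht1, htS⟩
    have ht0 : 0 < t := one_pos.trans ht1
    have : t ^ alpha ≤ tau := hSa ▸ rpow_le_rpow ht0.le htS ha0.le
    rw [div_le_div_iff₀ two_pos (by positivity)]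
    nlinarith
  calc (S ^ 2 - 1) / 4 = ∫ t in Ioc 1 S, t / 2 := by
        rw [← intervalIntegral.integral_of_le hS, intervalIntegral.integral_div, integral_id]
        ring
    _ ≤ ∫ t in Ioc 1 S, tau * t / (t ^ alpha + tau) :=
        setIntegral_mono_on (by fun_prop : Continuous fun t : ℝ => t / 2).integrableOn_Ioc
          (hint.mono_set Ioc_subset_Ioi_self) measurableSet_Ioc hhalf
    _ ≤ sirIntegral alpha tau :=
        setIntegral_mono_set hint
          ((ae_restrict_iff' measurableSet_Ioi).2 (ae_of_all _ fun t (ht : 1 < t) =>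
            sirIntegrand_nonneg alpha htau0.le (zero_le_one.trans ht.le)))
          (ae_of_all _ Ioc_subset_Ioi_self)

theorem tendsto_sirIntegral_atTop {alpha : ℝ} (halpha : 2 < alpha) :
    Tendsto (sirIntegral alpha) atTop atTop := by
  refine tendsto_atTop_mono' _ ((eventually_ge_atTop 1).mono fun tau => le_sirIntegral halpha) ?_
  refine Tendsto.atTop_div_const (by norm_num) (tendsto_atTop_add_const_right _ _ ?_)
  exact (tendsto_pow_atTop two_ne_zero).comp (tendsto_rpow_atTop (by positivity))

theorem K1_eq_sq_mul (tau alpha x : ℝ) (hx : 0 < x) :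
    K1 tau alpha x = x ^ 2 * (1 + 2 * sirIntegral alpha tau) := by
  have hsub : ∀ t ∈ Ioi (1 : ℝ),
      tau * x ^ alpha * (x * t) ^ (1 - alpha) / (1 + tau * x ^ alpha * (x * t) ^ (-alpha))
        = x * (tau * t / (t ^ alpha + tau)) := by
    intro t ht
    have ht0 : 0 < t := one_pos.trans ht
    rw [rpow_sub (by positivity), rpow_neg (by positivity), rpow_one, mul_rpow hx.le ht0.le]
    field_simp
  have := integral_comp_mul_left_Ioi
    (fun r => tau * x ^ alpha * r ^ (1 - alpha) / (1 + tau * x ^ alpha * r ^ (-alpha))) 1 hx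
  rw [mul_one, setIntegral_congr_fun measurableSet_Ioi hsub, integral_const_mul, smul_eq_mul,
    eq_inv_mul_iff_mul_eq₀ hx.ne'] at this
  rw [K1, ← this, sirIntegral]
  ring

theorem interferenceTerm_nonneg (alpha r u : ℝ) {eta tau x : ℝ} (heta : 0 ≤ eta) (htau : 0 ≤ tau)
    (hx : 0 ≤ x) :
    0 ≤ tau * x ^ alpha * eta * (r ^ 2 + u ^ 2) ^ (-(alpha / 2)) /
      (1 + tau * x ^ alpha * eta * (r ^ 2 + u ^ 2) ^ (-(alpha / 2))) := by
  positivity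

theorem K2_nonneg {mu rho alpha eta tau x : ℝ} (hmu : 0 ≤ mu) (hrho : 0 ≤ rho) (heta : 0 ≤ eta)
    (htau : 0 ≤ tau) (hx : 0 ≤ x) : 0 ≤ K2 mu rho alpha eta tau x := by
  refine intervalIntegral.integral_nonneg hrho fun r _ => sub_nonneg.2 (exp_le_one_iff.2 ?_)
  have := setIntegral_nonneg (μ := volume) (s := Ioi √(rho ^ 2 - r ^ 2)) measurableSet_Ioi
    fun u _ => interferenceTerm_nonneg alpha r u heta htau hx
  nlinarith [sqrt_nonneg (rho ^ 2 - r ^ 2)]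

theorem K3_nonneg {mu rho alpha eta tau x : ℝ} (hmu : 0 ≤ mu) (heta : 0 ≤ eta)
    (htau : 0 ≤ tau) (hx : 0 ≤ x) : 0 ≤ K3 mu rho alpha eta tau x := by
  refine setIntegral_nonneg measurableSet_Ioi fun r _ => sub_nonneg.2 (exp_le_one_iff.2 ?_)
  have := setIntegral_nonneg (μ := volume) (s := Ioi 0) measurableSet_Ioi
    fun u _ => interferenceTerm_nonneg alpha r u heta htau hx
  nlinarith

theorem C_DL_nonneg (lamL mu rho alpha eta tau : ℝ) {lamB : ℝ} (hlamB : 0 ≤ lamB) :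
    0 ≤ C_DL lamB lamL mu rho alpha eta tau :=
  setIntegral_nonneg measurableSet_Ioi fun x (hx : 0 < x) => by positivity

theorem C_DL_le {lamB lamL mu rho alpha eta tau : ℝ} (hlamB : 0 < lamB) (hlamL : 0 ≤ lamL)
    (hmu : 0 ≤ mu) (hrho : 0 ≤ rho) (heta : 0 ≤ eta) (htau : 0 ≤ tau) :
    C_DL lamB lamL mu rho alpha eta tau ≤ 1 / (1 + 2 * sirIntegral alpha tau) := by
  have hI := sirIntegral_nonneg alpha htau
  set c := π * lamB * (1 + 2 * sirIntegral alpha tau)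
  have hc : 0 < c := by positivity
  have hpointwise : ∀ x ∈ Ioi (0 : ℝ),
      2 * π * lamB * x * exp (-(π * lamB * K1 tau alpha x) - 2 * lamL * K2 mu rho alpha eta tau x
        - 2 * lamL * K3 mu rho alpha eta tau x) ≤ 2 * π * lamB * (x * exp (-c * x ^ 2)) := by
    intro x (hx : 0 < x)
    have := K2_nonneg (alpha := alpha) (x := x) hmu hrho heta htau hx.le
    have := K3_nonneg (rho := rho) (alpha := alpha) (x := x) hmu heta htau hx.le
    rw [← mul_assoc]
    gcongr
    rw [K1_eq_sq_mul tau alpha x hx]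
    nlinarith
  calc C_DL lamB lamL mu rho alpha eta tau
      ≤ ∫ x in Ioi (0 : ℝ), 2 * π * lamB * (x * exp (-c * x ^ 2)) :=
        integral_mono_of_nonneg
          ((ae_restrict_iff' measurableSet_Ioi).2 (ae_of_all _ fun x (hx : 0 < x) => by positivity))
          ((integrable_mul_exp_neg_mul_sq hc).integrableOn.const_mul _)
          ((ae_restrict_iff' measurableSet_Ioi).2 (ae_of_all _ hpointwise))
    _ = 1 / (1 + 2 * sirIntegral alpha tau) := by
        rw [integral_const_mul, integral_Ioi_mul_exp_neg_mul_sq hc]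
        simp only [c]
        field_simp

theorem downlink_coverage_upper_bound_and_vanishes (lamB lamL mu rho alpha eta : ℝ) (hlamB : 0 < lamB) (hlamL : 0 < lamL)
    (hmu : 0 < mu) (hrho : 0 < rho) (halpha : 2 < alpha) (heta : 0 < eta) :
    (∀ tau : ℝ, 0 < tau →
      C_DL lamB lamL mu rho alpha eta tau ≤
        1 / (1 + 2 * ∫ t in Set.Ioi (1:ℝ), tau * t / (t ^ alpha + tau))) ∧
    Filter.Tendsto (fun tau => C_DL lamB lamL mu rho alpha eta tau) Filter.atTop (nhds 0) := by
  have hle (tau : ℝ) (htau : 0 < tau) :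
      C_DL lamB lamL mu rho alpha eta tau ≤ 1 / (1 + 2 * sirIntegral alpha tau) :=
    C_DL_le hlamB hlamL.le hmu.le hrho.le heta.le htau.le
  refine ⟨hle, ?_⟩
  have hbound : Tendsto (fun tau => 1 / (1 + 2 * sirIntegral alpha tau)) atTop (nhds 0) := by
    have hden := tendsto_atTop_add_const_left _ 1
      ((tendsto_sirIntegral_atTop halpha).const_mul_atTop two_pos)
    simpa only [one_div, Function.comp_def] using tendsto_inv_atTop_zero.comp hden
  exact tendsto_of_tendsto_of_tendsto_of_le_of_le' tendsto_const_nhds hbound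
    (Eventually.of_forall fun tau => C_DL_nonneg lamL mu rho alpha eta tau hlamB.le)
    ((eventually_gt_atTop 0).mono hle)
end
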